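/- arXiv:1806.06007 — 3 statements merged into one kernel-verified Lean document; each statement's English description precedes it below -/
import Mathlib

section
/- The sequence of dominant roots (α_k) of the polynomials x^k − x^{k−1} − ⋯ − 1 is strictly increasing in k for k ≥ 2. -/
/-!
Dividing `x ^ k = ∑_{i<k} x ^ i` by `x ^ k` shows that the `k`-bonacci constant `α_k` is the
positive solution of `∑_{i=1}^{k} u ^ i = 1` in `u = α_k⁻¹`. The left side increases both with `u`
and with the number of terms, so `α_{k+1}⁻¹ < α_k⁻¹`.
-/

open Finset

theorem sum_range_inv_pow_succ_eq_one_of_pow_eq_sum {K : Type*} [Field K] {k : ℕ} {x : K}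
    (hx : x ≠ 0) (hroot : x ^ k = ∑ i ∈ range k, x ^ i) :
    ∑ i ∈ range k, x⁻¹ ^ (i + 1) = 1 := by
  have hterm : ∀ i ∈ range k, x⁻¹ ^ (i + 1) = x⁻¹ ^ k * x ^ (k - 1 - i) := by
    intro i hi
    have hik : (k - 1 - i) + (i + 1) = k := by have := mem_range.mp hi; omega
    calc x⁻¹ ^ (i + 1) = x⁻¹ ^ (i + 1) * (x⁻¹ * x) ^ (k - 1 - i) := by
          rw [inv_mul_cancel₀ hx, one_pow, mul_one]
      _ = x⁻¹ ^ ((k - 1 - i) + (i + 1)) * x ^ (k - 1 - i) := by ring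
      _ = x⁻¹ ^ k * x ^ (k - 1 - i) := by rw [hik]
  rw [sum_congr rfl hterm, ← mul_sum, sum_range_reflect (fun i => x ^ i) k, ← hroot,
    inv_pow, inv_mul_cancel₀ (pow_ne_zero k hx)]

theorem sum_range_pow_succ_le_of_le {R : Type*} [Semiring R] [PartialOrder R]
    [IsOrderedRing R] {u v : R} (hu : 0 ≤ u) (huv : u ≤ v) (n : ℕ) :
    ∑ i ∈ range n, u ^ (i + 1) ≤ ∑ i ∈ range n, v ^ (i + 1) :=
  sum_le_sum fun i _ => pow_le_pow_left₀ hu huv (i + 1)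

theorem kbonacci_roots_strict_mono_general (k : ℕ) (α β : ℝ)
    (hα : 0 < α) (hαroot : α ^ k - ∑ i ∈ Finset.range k, α ^ i = 0)
    (hβ : 0 < β) (hβroot : β ^ (k + 1) - ∑ i ∈ Finset.range (k + 1), β ^ i = 0) :
    α < β := by
  have hαsum := sum_range_inv_pow_succ_eq_one_of_pow_eq_sum hα.ne' (sub_eq_zero.mp hαroot)
  have hβsum := sum_range_inv_pow_succ_eq_one_of_pow_eq_sum hβ.ne' (sub_eq_zero.mp hβroot)
  by_contra! hβα
  have hinv : α⁻¹ ≤ β⁻¹ := inv_anti₀ hβ hβα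
  have := sum_range_pow_succ_le_of_le (inv_pos.mpr hα).le hinv (k + 1)
  rw [sum_range_succ, hαsum, hβsum] at this
  linarith [pow_pos (inv_pos.mpr hα) (k + 1)]

theorem kbonacci_roots_strict_mono (k : ℕ) (hk : 2 ≤ k) (α β : ℝ)
    (hα : 0 < α) (hαroot : α ^ k - ∑ i ∈ Finset.range k, α ^ i = 0)
    (hβ : 0 < β) (hβroot : β ^ (k + 1) - ∑ i ∈ Finset.range (k + 1), β ^ i = 0) :
    α < β :=
  kbonacci_roots_strict_mono_general k α β hα hαroot hβ hβroot
end

section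
/- For k ≥ 2, every complex root λ of x^k − x^{k−1} − ⋯ − x − 1 other than the positive root α_k satisfies |λ| < 1. -/
/-!
Write `p(x) = x^k - ∑_{i<k} x^i` and `r = ‖λ‖` for a root `λ` with `r ≥ 1`. The triangle inequality
in `λ^k = ∑ λ^i` gives `p(r) ≤ 0`, and in `λ^{k+1} + 1 = 2λ^k` (which is `(λ - 1) p(λ) = 0`) it gives
`(r - 1) p(r) ≥ 0`. Hence the second triangle inequality is an equality, so `λ^{k+1}` is a positive
real, and then `λ = r`. But `p` has only one positive root, since `p(x)/x^k` is strictly increasing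
on `(0, ∞)`.
-/

open Finset

theorem sub_one_mul_pow_sub_sum_range_pow {R : Type*} [CommRing R] (x : R) (k : ℕ) :
    (x - 1) * (x ^ k - ∑ i ∈ range k, x ^ i) = x ^ (k + 1) - 2 * x ^ k + 1 := by
  linear_combination -geom_sum_mul x k

theorem sum_range_pow_mul_pow_lt {k : ℕ} (hk : k ≠ 0) {s t : ℝ} (hs : 0 < s) (hst : s < t) :
    (∑ i ∈ range k, t ^ i) * s ^ k < (∑ i ∈ range k, s ^ i) * t ^ k := by
  rw [sum_mul, sum_mul]
  refine sum_lt_sum_of_nonempty (nonempty_range_iff.2 hk) fun i hi => ?_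
  obtain ⟨j, rfl⟩ := Nat.exists_eq_add_of_lt (mem_range.1 hi)
  have hj : s ^ (j + 1) < t ^ (j + 1) := pow_lt_pow_left₀ hst hs.le j.succ_ne_zero
  have ht : 0 < t := hs.trans hst
  calc t ^ i * s ^ (i + j + 1) = t ^ i * s ^ i * s ^ (j + 1) := by ring
    _ < t ^ i * s ^ i * t ^ (j + 1) := by gcongr
    _ = s ^ i * t ^ (i + j + 1) := by ring

theorem eq_of_pow_sub_sum_range_pow_eq_zero {k : ℕ} {s t : ℝ} (hs : 0 < s) (ht : 0 < t)
    (hs_root : s ^ k - ∑ i ∈ range k, s ^ i = 0) (ht_root : t ^ k - ∑ i ∈ range k, t ^ i = 0) :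
    s = t := by
  have hk : k ≠ 0 := by
    rintro rfl
    simp at hs_root
  wlog hst : s < t generalizing s t
  · rcases (not_lt.1 hst).lt_or_eq with hts | rfl
    · exact (this ht hs ht_root hs_root hts).symm
    · rfl
  have := sum_range_pow_mul_pow_lt hk hs hst
  rw [← sub_eq_zero.1 hs_root, ← sub_eq_zero.1 ht_root, mul_comm] at this
  exact (lt_irrefl _ this).elim

theorem Complex.eq_norm_of_norm_add_one {z : ℂ} (h : ‖z + 1‖ = ‖z‖ + 1) : z = ‖z‖ := by
  have hray : SameRay ℝ z 1 := sameRay_iff_norm_add.2 (by rwa [norm_one])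
  simpa [Complex.real_smul] using (sameRay_iff_norm_smul_eq.1 hray).symm

theorem eq_norm_of_pow_sub_sum_range_pow_eq_zero {k : ℕ} {z : ℂ}
    (hz : z ^ k - ∑ i ∈ range k, z ^ i = 0) (h1 : 1 ≤ ‖z‖) : z = ‖z‖ := by
  set r := ‖z‖ with hr
  have hq : z ^ (k + 1) + 1 = 2 * z ^ k := by
    linear_combination (sub_one_mul_pow_sub_sum_range_pow z k).symm + (z - 1) * hz
  have hpr : r ^ k - ∑ i ∈ range k, r ^ i ≤ 0 := by
    have : ‖z ^ k‖ ≤ ∑ i ∈ range k, ‖z ^ i‖ := sub_eq_zero.1 hz ▸ norm_sum_le _ _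
    simpa [norm_pow] using this
  have hnorm_q : ‖z ^ (k + 1) + 1‖ = 2 * r ^ k := by simp [hq, norm_pow, hr]
  have hr_eq : r ^ (k + 1) + 1 = 2 * r ^ k := by
    have hle : ‖z ^ (k + 1) + 1‖ ≤ r ^ (k + 1) + 1 := by
      simpa [norm_pow] using norm_add_le (z ^ (k + 1)) 1
    nlinarith [sub_one_mul_pow_sub_sum_range_pow r k, mul_nonpos_of_nonneg_of_nonpos
      (sub_nonneg.2 h1) hpr]
  have hz_succ : z ^ (k + 1) = ((r ^ (k + 1) : ℝ) : ℂ) := by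
    have := Complex.eq_norm_of_norm_add_one (z := z ^ (k + 1)) (by rw [hnorm_q, norm_pow, hr_eq])
    rwa [norm_pow] at this
  have hz_pow : z ^ k = ((r ^ k : ℝ) : ℂ) := by
    have : (2 : ℂ) * z ^ k = 2 * ((r ^ k : ℝ) : ℂ) := by
      rw [← hq, hz_succ]
      exact_mod_cast hr_eq
    exact mul_left_cancel₀ two_ne_zero this
  have hrk : ((r ^ k : ℝ) : ℂ) ≠ 0 := by
    exact_mod_cast (pow_pos (one_pos.trans_le h1) k).ne'
  refine mul_right_cancel₀ hrk ?_
  rw [← hz_pow, ← pow_succ', hz_succ, hz_pow]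
  push_cast
  ring

theorem kbonacci_other_roots_small_general (k : ℕ) (α : ℝ) (hα : 0 < α)
    (hαroot : α ^ k - ∑ i ∈ Finset.range k, α ^ i = 0)
    (lam : ℂ) (hlam : lam ^ k - ∑ i ∈ Finset.range k, lam ^ i = 0)
    (hne : lam ≠ (α : ℂ)) : ‖lam‖ < 1 := by
  by_contra! h1
  have hlam_real := eq_norm_of_pow_sub_sum_range_pow_eq_zero hlam h1
  have hr_root : ‖lam‖ ^ k - ∑ i ∈ range k, ‖lam‖ ^ i = 0 := by
    rw [hlam_real] at hlam
    exact_mod_cast hlam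
  have hr_eq := eq_of_pow_sub_sum_range_pow_eq_zero (one_pos.trans_le h1) hα hr_root hαroot
  exact hne (by rw [hlam_real, hr_eq])

theorem kbonacci_other_roots_small (k : ℕ) (hk : 2 ≤ k) (α : ℝ) (hα : 0 < α)
    (hαroot : α ^ k - ∑ i ∈ Finset.range k, α ^ i = 0)
    (lam : ℂ) (hlam : lam ^ k - ∑ i ∈ Finset.range k, lam ^ i = 0)
    (hne : lam ≠ (α : ℂ)) : ‖lam‖ < 1 :=
  kbonacci_other_roots_small_general k α hα hαroot lam hlam hne
end

section
/- For k ≥ 2, the difference α_{k+1} − α_k of consecutive k-bonacci constants is positive and α_{k+1} − α_k < 2^{1−k}; hence the sequence of differences tends to 0. -/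
/-!
Dividing `x ^ k = x ^ (k - 1) + ⋯ + 1` by `x ^ k`, the `k`-bonacci constant is the unique
positive solution of `S_k(x) = x⁻¹ + ⋯ + x⁻ᵏ = 1`, and `S_k` is strictly decreasing on `(0, ∞)`.
So bounds on the constant are read off from values of `S_k`: `S_k(2) = 1 - 2⁻ᵏ < 1` gives
`α_k < 2`, `S_{k+1}(α_k) = 1 + α_k⁻⁽ᵏ⁺¹⁾ > 1` gives `α_k < α_{k+1}`, and for `b = 2 - 2¹⁻ᵏ`
the identity `S_k(b) b ^ k (b - 1) = b ^ k - 1` together with Bernoulli's inequality gives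
`S_k(b) > 1`, hence `b < α_k`.
-/

open Filter Finset

noncomputable def invPowSum (x : ℝ) (k : ℕ) : ℝ := ∑ j ∈ range k, x⁻¹ ^ (j + 1)

lemma invPowSum_succ (x : ℝ) (k : ℕ) :
    invPowSum x (k + 1) = invPowSum x k + x⁻¹ ^ (k + 1) :=
  sum_range_succ _ _

lemma invPowSum_mul_pow {x : ℝ} (hx : x ≠ 0) (k : ℕ) :
    invPowSum x k * x ^ k = ∑ i ∈ range k, x ^ i := by
  rw [invPowSum, sum_mul, ← sum_range_reflect (x ^ ·) k]
  refine sum_congr rfl fun j hj => ?_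
  rw [mem_range] at hj
  rw [inv_pow, inv_mul_eq_div, div_eq_iff (pow_ne_zero _ hx), ← pow_add]
  congr 1
  omega

lemma invPowSum_mul_pow_mul_sub_one {x : ℝ} (hx : x ≠ 0) (k : ℕ) :
    invPowSum x k * (x ^ k * (x - 1)) = x ^ k - 1 := by
  rw [← mul_assoc, invPowSum_mul_pow hx, geom_sum_mul]

lemma invPowSum_two (k : ℕ) : invPowSum 2 k = 1 - (2 ^ k)⁻¹ := by
  have h := invPowSum_mul_pow_mul_sub_one two_ne_zero k
  norm_num at h
  refine mul_right_cancel₀ (pow_ne_zero k two_ne_zero) ?_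
  rw [h, sub_mul, inv_mul_cancel₀ (pow_ne_zero k two_ne_zero), one_mul]

lemma strictAntiOn_invPowSum {k : ℕ} (hk : k ≠ 0) : StrictAntiOn (invPowSum · k) (Set.Ioi 0) :=
  fun _ hx _ hy hxy => sum_lt_sum_of_nonempty (nonempty_range_iff.2 hk) fun _ _ =>
    pow_lt_pow_left₀ (inv_strictAnti₀ hx hxy) (inv_pos.2 hy).le (Nat.succ_ne_zero _)

lemma invPowSum_eq_one_of_pow_sub_sum_eq_zero {x : ℝ} (hx : 0 < x) {k : ℕ}
    (hroot : x ^ k - ∑ i ∈ range k, x ^ i = 0) : invPowSum x k = 1 := by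
  refine mul_right_cancel₀ (pow_ne_zero k hx.ne') ?_
  rw [invPowSum_mul_pow hx.ne', one_mul]
  linarith

lemma one_lt_invPowSum_of_one_lt_pow_mul_two_sub {y : ℝ} {k : ℕ} (hy : 1 < y)
    (h : 1 < y ^ k * (2 - y)) : 1 < invPowSum y k := by
  have hden : 0 < y ^ k * (y - 1) := mul_pos (by positivity) (by linarith)
  rw [← mul_lt_mul_iff_left₀ hden, invPowSum_mul_pow_mul_sub_one (by positivity), one_mul]
  linarith

lemma two_mul_le_two_pow (k : ℕ) : 2 * k ≤ 2 ^ k := by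
  cases k with
  | zero => simp
  | succ k =>
    have := Nat.lt_two_pow_self (n := k)
    rw [pow_succ]
    omega

lemma one_half_lt_one_sub_inv_two_pow_pow {k : ℕ} (hk : 2 ≤ k) :
    (1 / 2 : ℝ) < (1 - (2 ^ k)⁻¹) ^ k := by
  have hpow : (1 : ℝ) ≤ 2 ^ k := one_le_pow₀ one_le_two
  have hbernoulli := one_add_mul_self_lt_rpow_one_add (s := -(2 ^ k)⁻¹)
    (by linarith [inv_le_one_of_one_le₀ hpow]) (neg_ne_zero.2 (by positivity)) (p := k) (by exact_mod_cast hk)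
  rw [Real.rpow_natCast, ← sub_eq_add_neg] at hbernoulli
  have hk2 : (2 * k : ℝ) ≤ 2 ^ k := by exact_mod_cast two_mul_le_two_pow k
  have : (k : ℝ) * (2 ^ k)⁻¹ ≤ 1 / 2 := by
    rw [← div_eq_mul_inv, div_le_iff₀ (by positivity)]
    linarith
  linarith

section RootBounds

variable {x : ℝ} {k : ℕ}

lemma lt_two_of_invPowSum_eq_one (hk : k ≠ 0) (hx : 0 < x) (hS : invPowSum x k = 1) :
    x < 2 := by
  refine ((strictAntiOn_invPowSum hk).lt_iff_gt (Set.mem_Ioi.2 two_pos) hx).1 ?_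
  rw [hS, invPowSum_two]
  simp

lemma two_sub_two_div_two_pow_lt_of_invPowSum_eq_one (hk : 2 ≤ k) (hx : 0 < x)
    (hS : invPowSum x k = 1) : 2 - 2 / 2 ^ k < x := by
  set b : ℝ := 2 - 2 / 2 ^ k
  have hpow : (4 : ℝ) ≤ 2 ^ k := by
    calc (4 : ℝ) = 2 ^ 2 := by norm_num
    _ ≤ 2 ^ k := pow_le_pow_right₀ one_le_two hk
  have hb : 1 < b := by
    have : (2 : ℝ) / 2 ^ k ≤ 1 / 2 := by rw [div_le_iff₀ (by positivity)]; linarith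
    linarith
  have hb_pow : b ^ k * (2 - b) = 2 * (1 - (2 ^ k)⁻¹) ^ k := by
    rw [show b = 2 * (1 - (2 ^ k)⁻¹) by ring, mul_pow]
    field_simp
    ring
  have hSb : 1 < invPowSum b k := by
    refine one_lt_invPowSum_of_one_lt_pow_mul_two_sub hb ?_
    linarith [one_half_lt_one_sub_inv_two_pow_pow hk]
  refine ((strictAntiOn_invPowSum (k := k) (by omega)).lt_iff_gt hx
    (Set.mem_Ioi.2 (by linarith))).1 ?_
  rwa [hS]

lemma lt_of_invPowSum_eq_one_of_invPowSum_succ_eq_one {y : ℝ} (hx : 0 < x) (hy : 0 < y)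
    (hSx : invPowSum x k = 1) (hSy : invPowSum y (k + 1) = 1) : x < y := by
  refine ((strictAntiOn_invPowSum k.succ_ne_zero).lt_iff_gt hy hx).1 ?_
  rw [hSy, invPowSum_succ, hSx]
  simp only [lt_add_iff_pos_right]
  positivity

end RootBounds

lemma two_zpow_one_sub_natCast (k : ℕ) : (2 : ℝ) ^ (1 - (k : ℤ)) = 2 / 2 ^ k := by
  rw [zpow_sub₀ two_ne_zero, zpow_one, zpow_natCast]

theorem kbonacci_root_differences (α : ℕ → ℝ)
    (h : ∀ k, 2 ≤ k → 0 < α k ∧ (α k) ^ k - ∑ i ∈ Finset.range k, (α k) ^ i = 0) :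
    (∀ k, 2 ≤ k → 0 < α (k + 1) - α k ∧ α (k + 1) - α k < (2 : ℝ) ^ (1 - (k : ℤ))) ∧
    Tendsto (fun k => α (k + 1) - α k) atTop (nhds 0) := by
  have bounds : ∀ k, 2 ≤ k → 0 < α (k + 1) - α k ∧ α (k + 1) - α k < 2 / 2 ^ k := by
    intro k hk
    obtain ⟨hpos, hroot⟩ := h k hk
    obtain ⟨hpos', hroot'⟩ := h (k + 1) (by omega)
    have hS := invPowSum_eq_one_of_pow_sub_sum_eq_zero hpos hroot
    have hS' := invPowSum_eq_one_of_pow_sub_sum_eq_zero hpos' hroot'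
    have hlt := lt_of_invPowSum_eq_one_of_invPowSum_succ_eq_one hpos hpos' hS hS'
    have hlower := two_sub_two_div_two_pow_lt_of_invPowSum_eq_one hk hpos hS
    have hupper := lt_two_of_invPowSum_eq_one k.succ_ne_zero hpos' hS'
    constructor <;> linarith
  refine ⟨fun k hk => two_zpow_one_sub_natCast k ▸ bounds k hk, ?_⟩
  have hevent : ∀ᶠ k in atTop, 2 ≤ k := eventually_ge_atTop 2
  exact squeeze_zero' (hevent.mono fun k hk => (bounds k hk).1.le)
    (hevent.mono fun k hk => (bounds k hk).2.le)
    ((tendsto_pow_atTop_atTop_of_one_lt one_lt_two).const_div_atTop 2)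
end
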